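/- Let e ∈ ℂ[S_N] be a primitive idempotent not lying in the annihilator ideal J₀ of the Hilbert space H. Then e·(ē)* ≠ 0, and there exists a nonzero real number α with e·(ē)*·e = α·e; consequently f := (1/α)·e·(ē)* is an idempotent satisfying (f̄)* = f and generating the same right ideal as e. -/

import Mathlib

open MonoidAlgebra

noncomputable section

/-- The complex group ring `ℂ[S_N]`. -/
abbrev GA (N : ℕ) : Type := MonoidAlgebra ℂ (Equiv.Perm (Fin N))

/-- The star operation `a* = Σ_p a_p p⁻¹`. -/
def starOp {N : ℕ} (a : GA N) : GA N :=
  MonoidAlgebra.ofCoeff (Finsupp.equivMapDomain (Equiv.inv (Equiv.Perm (Fin N))) a.coeff)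

/-- Coefficient-wise complex conjugation `ā = Σ_p conj(a_p) p`. -/
def conjOp {N : ℕ} (a : GA N) : GA N :=
  MonoidAlgebra.ofCoeff (Finsupp.mapRange (starRingEnd ℂ) (map_zero _) a.coeff)

/-- The Hilbert space `H` with orthonormal basis indexed by `σ : {1,…,N} → {1,…,K}`. -/
abbrev H (N K : ℕ) : Type := (Fin N → Fin K) → ℂ

/-- The basis vector `|σ⟩`. -/
def ket {N K : ℕ} (σ : Fin N → Fin K) : H N K :=
  fun τ => if τ = σ then 1 else 0

/-- Action of `a = Σ_p a_p p ∈ ℂ[S_N]` on `w ∈ H`: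
`a w = Σ_p Σ_σ a_p w_σ |σ ∘ p⁻¹⟩`; the coefficient of `aw` at `τ` is `Σ_p a_p w_{τ∘p}`. -/
def act {N K : ℕ} (a : GA N) (w : H N K) : H N K :=
  fun τ => ∑ p : Equiv.Perm (Fin N), a.coeff p * w (τ ∘ p)

/-- The inner product `⟨u, v⟩ = Σ_σ u_σ conj(v_σ)`. -/
def inn {N K : ℕ} (u v : H N K) : ℂ :=
  ∑ σ : Fin N → Fin K, u σ * (starRingEnd ℂ) (v σ)

/-! Write `a*` for `(ā)*`. It makes `ℂ[S_N]` a ∗-algebra, and `H` a ∗-representation of it: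
`⟨a u, v⟩ = ⟨u, a* v⟩`. If `e e* e = c e` and `v = e u ≠ 0`, then
`c ‖v‖² = ⟨e e* e v, v⟩ = ‖e* v‖²`, and `e* v ≠ 0` because `‖v‖² = ⟨e v, v⟩ = ⟨v, e* v⟩`;
hence `c > 0`. The rest is algebra in any ∗-algebra over a field: `f = c⁻¹ e e*` satisfies
`f² = c⁻² (e e* e) e* = f`, is self-adjoint since `c` is real, and `f e = e`, `f = e (c⁻¹ e*)`
show `f A = e A`. -/

section StarStructure

variable {N : ℕ}

instance : Star (GA N) := ⟨fun a => starOp (conjOp a)⟩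

lemma starOp_conjOp_eq_star (a : GA N) : starOp (conjOp a) = star a := rfl

lemma coeff_star (a : GA N) (p : Equiv.Perm (Fin N)) :
    (star a).coeff p = starRingEnd ℂ (a.coeff p⁻¹) := rfl

lemma coeff_mul_eq_sum_inv_mul (a b : GA N) (p : Equiv.Perm (Fin N)) :
    (a * b).coeff p = ∑ q, a.coeff q * b.coeff (q⁻¹ * p) := by
  rw [MonoidAlgebra.coeff_mul_apply_left, Finsupp.sum_fintype _ _ (by simp)]

instance : StarRing (GA N) where
  star_involutive a := by ext p; simp [coeff_star]
  star_mul a b := by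
    ext p
    simp only [coeff_star, coeff_mul_eq_sum_inv_mul, map_sum, map_mul]
    refine Fintype.sum_equiv (Equiv.mulLeft p) _ _ fun q => ?_
    simp [mul_comm, mul_assoc]
  star_add a b := by ext p; simp [coeff_star]

instance : StarModule ℂ (GA N) where
  star_smul c a := by ext p; simp [coeff_star]

end StarStructure

section Action

variable {N K : ℕ}

def permRep : Equiv.Perm (Fin N) →* Module.End ℂ (H N K) where
  toFun p := LinearMap.funLeft ℂ ℂ (· ∘ ⇑p)
  map_one' := rfl
  map_mul' _ _ := rfl

lemma act_eq_lift (a : GA N) (w : H N K) :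
    act a w = MonoidAlgebra.lift ℂ (Module.End ℂ (H N K)) _ permRep a w := by
  rw [MonoidAlgebra.lift_apply, Finsupp.sum_fintype _ _ (by simp)]
  ext τ
  simp only [act, permRep, LinearMap.coe_sum, LinearMap.coe_smul, Finset.sum_apply, Pi.smul_apply,
    smul_eq_mul]
  rfl

lemma act_mul (a b : GA N) (w : H N K) : act (a * b) w = act a (act b w) := by
  simp only [act_eq_lift, map_mul, Module.End.mul_apply]

lemma act_smul (c : ℂ) (a : GA N) (w : H N K) : act (c • a) w = c • act a w := by
  simp only [act_eq_lift, map_smul, LinearMap.smul_apply]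

lemma inn_eq_dotProduct (u v : H N K) : inn u v = u ⬝ᵥ star v := rfl

lemma inn_act_left (a : GA N) (u v : H N K) : inn (act a u) v = inn u (act (star a) v) := by
  have reindex (p : Equiv.Perm (Fin N)) (f : (Fin N → Fin K) → ℂ) :
      ∑ σ, f (σ ∘ ⇑p) = ∑ σ, f σ :=
    Fintype.sum_equiv (Equiv.arrowCongr p.symm (Equiv.refl _)) _ _ fun σ => rfl
  simp only [inn, act, coeff_star, Finset.sum_mul, map_sum, map_mul, Complex.conj_conj,
    Finset.mul_sum]
  rw [Finset.sum_comm]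
  conv_rhs => rw [Finset.sum_comm]
  refine Fintype.sum_equiv (Equiv.inv _) _ _ fun p => ?_
  rw [← reindex p⁻¹]
  refine Finset.sum_congr rfl fun σ _ => ?_
  simp only [Equiv.Perm.coe_inv, Function.comp_def, Equiv.symm_apply_apply, Equiv.inv_apply,
    inv_inv]
  ring

open ComplexOrder in
lemma inn_self_pos {v : H N K} (hv : v ≠ 0) : 0 < inn v v := by
  rw [inn_eq_dotProduct]
  exact Matrix.dotProduct_self_star_pos_iff.mpr hv

lemma inn_smul_left (c : ℂ) (u v : H N K) : inn (c • u) v = c * inn u v := by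
  simp [inn_eq_dotProduct]

end Action

section Positivity

variable {N K : ℕ}

open ComplexOrder in
theorem pos_of_mul_star_mul_eq_smul {e : GA N} (he : IsIdempotentElem e) {c : ℂ}
    (hc : e * star e * e = c • e) {u : H N K} (hu : act e u ≠ 0) : 0 < c := by
  set v := act e u
  have hev : act e v = v := by rw [← act_mul, he.eq]
  have hv : 0 < inn v v := inn_self_pos hu
  have hw : act (star e) v ≠ 0 := by
    intro h
    apply hv.ne'
    calc inn v v = inn v (act (star e) v) := by rw [← inn_act_left, hev]
      _ = 0 := by simp [h, inn]
  have key : c * inn v v = inn (act (star e) v) (act (star e) v) := by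
    calc c * inn v v = inn (act (c • e) v) v := by rw [act_smul, inn_smul_left, hev]
      _ = inn (act e (act (star e) v)) v := by rw [← hc, act_mul, act_mul, hev]
      _ = _ := by rw [inn_act_left]
  have hc_eq : c = inn (act (star e) v) (act (star e) v) / inn v v := by
    rw [← key, mul_div_cancel_right₀ _ hv.ne']
  exact hc_eq ▸ div_pos (inn_self_pos hw) hv

end Positivity

section CornerAlgebra

variable {𝕜 A : Type*} [Field 𝕜] [Semiring A] [Algebra 𝕜 A] {e b : A} {c : 𝕜}

theorem mul_ne_zero_of_mul_mul_eq_smul (he : e ≠ 0) (hc : c ≠ 0) (h : e * b * e = c • e) :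
    e * b ≠ 0 := by
  intro heb
  rw [heb, zero_mul, eq_comm, smul_eq_zero] at h
  exact h.elim hc he

theorem isIdempotentElem_inv_smul_mul (hc : c ≠ 0) (h : e * b * e = c • e) :
    IsIdempotentElem (c⁻¹ • (e * b)) := by
  rw [IsIdempotentElem, smul_mul_smul, ← mul_assoc, h, smul_mul_assoc, smul_smul,
    inv_mul_cancel_right₀ hc]

theorem exists_eq_inv_smul_mul_mul_iff (hc : c ≠ 0) (h : e * b * e = c • e) (x : A) :
    (∃ y, x = c⁻¹ • (e * b) * y) ↔ ∃ y, x = e * y := by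
  constructor
  · rintro ⟨y, rfl⟩
    exact ⟨c⁻¹ • (b * y), by rw [smul_mul_assoc, mul_smul_comm, mul_assoc]⟩
  · rintro ⟨y, rfl⟩
    refine ⟨e * y, ?_⟩
    rw [← mul_assoc, smul_mul_assoc, h, smul_smul, inv_mul_cancel₀ hc, one_smul]

end CornerAlgebra

/-- for a primitive idempotent `e ∉ J₀`, one has `e·(ē)* ≠ 0`, there is a
nonzero real `α` with `e·(ē)*·e = α e`, and `f = (1/α)·e·(ē)*` is an idempotent with
property (S) generating the same right ideal as `e`. -/
theorem primitive_idempotent_selfadjoint (N K : ℕ) (e : GA N) (he : e * e = e)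
    (hprim : ∀ x : GA N, ∃ c : ℂ, e * x * e = c • e)
    (hne : ∃ u : H N K, act e u ≠ 0) :
    e * starOp (conjOp e) ≠ 0 ∧
    ∃ α : ℝ, α ≠ 0 ∧ e * starOp (conjOp e) * e = (α : ℂ) • e ∧
      ((α : ℂ)⁻¹ • (e * starOp (conjOp e))) * ((α : ℂ)⁻¹ • (e * starOp (conjOp e))) =
        (α : ℂ)⁻¹ • (e * starOp (conjOp e)) ∧
      starOp (conjOp ((α : ℂ)⁻¹ • (e * starOp (conjOp e)))) =
        (α : ℂ)⁻¹ • (e * starOp (conjOp e)) ∧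
      ∀ x : GA N, (∃ y : GA N, x = ((α : ℂ)⁻¹ • (e * starOp (conjOp e))) * y) ↔
        (∃ y : GA N, x = e * y) := by
  simp only [starOp_conjOp_eq_star]
  obtain ⟨u, hu⟩ := hne
  obtain ⟨c, hc⟩ := hprim (star e)
  obtain ⟨α, hα_pos, rfl⟩ := open ComplexOrder in
    RCLike.pos_iff_exists_ofReal.mp (pos_of_mul_star_mul_eq_smul he hc hu)
  have hα : (α : ℂ) ≠ 0 := by exact_mod_cast hα_pos.ne'
  have he_ne : e ≠ 0 := by
    rintro rfl
    exact hu (by simp [act_eq_lift])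
  refine ⟨mul_ne_zero_of_mul_mul_eq_smul he_ne hα hc, α, hα_pos.ne', hc,
    isIdempotentElem_inv_smul_mul hα hc, ?_, exists_eq_inv_smul_mul_mul_iff hα hc⟩
  have hα_sa : IsSelfAdjoint (α : ℂ) := Complex.conj_ofReal α
  exact (hα_sa.inv₀.smul (IsSelfAdjoint.mul_star_self e)).star_eq
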